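/- Let λ > 0, let b be a bump function as in the context, and let v ∈ L¹(ℝ). Then for all f, g ∈ L¹(ℝ) with ‖f‖₁ ≤ λ²/9 and ‖g‖₁ ≤ λ²/9, one has ‖R[f] − R[g]‖₁ ≤ (1/2)·‖f − g‖₁. -/

import Mathlib

open MeasureTheory Real

/-- Convolution of complex-valued functions on `ℝ`:
`(f ∗ g)(ξ) = ∫_ℝ f(ξ − η)·g(η) dη`. -/
noncomputable def convol (f g : ℝ → ℂ) (ξ : ℝ) : ℂ :=
  ∫ η : ℝ, f (ξ - η) * g η

/-- The `m`-fold convolution power `f^{∗m}` (`f^{∗1} = f`, `f^{∗(m+1)} = f^{∗m} ∗ f`);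
the value at `m = 0` is junk and unused. -/
noncomputable def convPow (f : ℝ → ℂ) : ℕ → ℝ → ℂ
  | 0 => fun _ => 0
  | 1 => f
  | (m + 2) => convol (convPow f (m + 1)) f

/-- `exp₂∗[f] = Σ_{m=2}^∞ f^{∗m}/m!`. -/
noncomputable def exp2Star (f : ℝ → ℂ) (ξ : ℝ) : ℂ :=
  ∑' m : ℕ, convPow f (m + 2) ξ / ((m + 2).factorial : ℂ)

/-- `W_b[f](ξ) = f(ξ)·b(ξ)/(4λ² − ξ²)`. -/
noncomputable def opWb (lam : ℝ) (b : ℝ → ℝ) (f : ℝ → ℂ) (ξ : ℝ) : ℂ :=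
  f ξ * ((b ξ / (4 * lam ^ 2 - ξ ^ 2) : ℝ) : ℂ)

/-- `W̃_b[f](ξ) = f(ξ)·iξ·b(ξ)/(4λ² − ξ²)`. -/
noncomputable def opWtb (lam : ℝ) (b : ℝ → ℝ) (f : ℝ → ℂ) (ξ : ℝ) : ℂ :=
  f ξ * Complex.I * (ξ : ℂ) * ((b ξ / (4 * lam ^ 2 - ξ ^ 2) : ℝ) : ℂ)

/-- `R[f](ξ) = (1/4)(W̃_b[f] ∗ W̃_b[f])(ξ) − 4λ²·exp₂∗[W_b[f]](ξ) + v(ξ)`. -/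
noncomputable def opR (lam : ℝ) (b : ℝ → ℝ) (v : ℝ → ℂ) (f : ℝ → ℂ) (ξ : ℝ) : ℂ :=
  (1 / 4) * convol (opWtb lam b f) (opWtb lam b f) ξ
    - 4 * lam ^ 2 * exp2Star (opWb lam b f) ξ + v ξ


open Convolution

lemma ofReal_norm_eq_coe_nnnorm {E : Type*} [SeminormedAddGroup E] (a : E) :
    ENNReal.ofReal ‖a‖ = (‖a‖₊ : ENNReal) := ofReal_norm a

lemma ofReal_integral_norm_eq_lintegral_nnnorm {f : ℝ → ℂ} (hf : Integrable f) :
    ENNReal.ofReal (∫ x, ‖f x‖) = ∫⁻ x, (‖f x‖₊ : ENNReal) :=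
  ofReal_integral_norm_eq_lintegral_enorm hf

lemma eLpNorm_one_eq_lintegral_nnnorm {f : ℝ → ℂ} :
    eLpNorm f 1 volume = ∫⁻ x, (‖f x‖₊ : ENNReal) := eLpNorm_one_eq_lintegral_enorm

noncomputable def LL : ℂ →L[ℝ] ℂ →L[ℝ] ℂ := (ContinuousLinearMap.mul ℝ ℂ).flip

lemma convol_eq (u w : ℝ → ℂ) : convol u w = (w ⋆[LL, volume] u) := by
  funext ξ
  simp [convol, convolution_def, LL]
  congr 1; funext η; ring

lemma convol_integrable {u w : ℝ → ℂ} (hu : Integrable u) (hw : Integrable w) :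
    Integrable (convol u w) := by
  rw [convol_eq]; exact hw.integrable_convolution LL hu

lemma convol_ae_int {u w : ℝ → ℂ} (hu : Integrable u) (hw : Integrable w) :
    ∀ᵐ ξ : ℝ, Integrable (fun η => u (ξ - η) * w η) := by
  have h := hw.ae_convolution_exists (μ := volume) (ν := volume) LL hu
  filter_upwards [h] with ξ hξ
  simpa [ConvolutionExistsAt, LL, mul_comm] using hξ

lemma lint_shift (u : ℝ → ℂ) (η : ℝ) :
    ∫⁻ ξ : ℝ, (‖u (ξ - η)‖₊ : ENNReal) = ∫⁻ ξ : ℝ, (‖u ξ‖₊ : ENNReal) :=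
  lintegral_sub_right_eq_self (fun ξ => (‖u ξ‖₊ : ENNReal)) η

lemma lint2 {u w : ℝ → ℂ} (hu : Integrable u) (hw : Integrable w) :
    ∫⁻ ξ : ℝ, ∫⁻ η : ℝ, (‖u (ξ - η)‖₊ : ENNReal) * (‖w η‖₊ : ENNReal)
      ≤ (∫⁻ x : ℝ, (‖u x‖₊ : ENNReal)) * ∫⁻ x : ℝ, (‖w x‖₊ : ENNReal) := by
  have hmeas : AEMeasurable (Function.uncurry fun ξ η =>
      (‖u (ξ - η)‖₊ : ENNReal) * (‖w η‖₊ : ENNReal)) (volume.prod volume) := by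
    have h := (hw.aestronglyMeasurable.convolution_integrand LL
      hu.aestronglyMeasurable).enorm
    refine h.congr (Filter.Eventually.of_forall ?_)
    intro p
    simp [LL, Function.uncurry, mul_comm]
    rfl
  rw [lintegral_lintegral_swap hmeas]
  have : ∀ η : ℝ, ∫⁻ ξ : ℝ, (‖u (ξ - η)‖₊ : ENNReal) * (‖w η‖₊ : ENNReal)
      = (∫⁻ x : ℝ, (‖u x‖₊ : ENNReal)) * (‖w η‖₊ : ENNReal) := by
    intro η
    rw [lintegral_mul_const' _ _ ENNReal.coe_ne_top, lint_shift]
  simp_rw [this]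
  rw [lintegral_const_mul' (∫⁻ x : ℝ, (‖u x‖₊ : ENNReal)) _ (hu.2.ne)]

lemma enorm_convol_le (u w : ℝ → ℂ) (ξ : ℝ) :
    (‖convol u w ξ‖₊ : ENNReal) ≤ ∫⁻ η : ℝ, (‖u (ξ - η)‖₊ : ENNReal) * (‖w η‖₊ : ENNReal) := by
  refine (enorm_integral_le_lintegral_enorm _).trans_eq ?_
  simp [nnnorm_mul, ENNReal.coe_mul]
  rfl

lemma lconv {u w : ℝ → ℂ} (hu : Integrable u) (hw : Integrable w) :
    ∫⁻ ξ : ℝ, (‖convol u w ξ‖₊ : ENNReal)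
      ≤ (∫⁻ x : ℝ, (‖u x‖₊ : ENNReal)) * ∫⁻ x : ℝ, (‖w x‖₊ : ENNReal) :=
  (lintegral_mono fun ξ => enorm_convol_le u w ξ).trans (lint2 hu hw)

lemma convPow_succ (u : ℝ → ℂ) (k : ℕ) :
    convPow u (k + 2) = convol (convPow u (k + 1)) u := rfl

lemma convPow_int {u : ℝ → ℂ} (hu : Integrable u) : ∀ k : ℕ, Integrable (convPow u (k + 1))
  | 0 => hu
  | (k + 1) => convol_integrable (convPow_int hu k) hu

lemma convPow_lint {u : ℝ → ℂ} (hu : Integrable u) {M : ENNReal}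
    (hM : ∫⁻ x : ℝ, (‖u x‖₊ : ENNReal) ≤ M) :
    ∀ k : ℕ, ∫⁻ ξ : ℝ, (‖convPow u (k + 1) ξ‖₊ : ENNReal) ≤ M ^ (k + 1) := by
  intro k
  induction k with
  | zero => simpa [show convPow u 1 = u from rfl] using hM
  | succ k ih =>
      rw [convPow_succ]
      refine (lconv (convPow_int hu k) hu).trans ?_
      calc (∫⁻ x : ℝ, (‖convPow u (k+1) x‖₊ : ENNReal)) * ∫⁻ x : ℝ, (‖u x‖₊ : ENNReal)
          ≤ M ^ (k+1) * M := mul_le_mul' ih hM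
        _ = M ^ (k+2) := by ring

lemma conv_sub_ae {x y u w : ℝ → ℂ} (hx : Integrable x) (hy : Integrable y)
    (hu : Integrable u) (hw : Integrable w) :
    ∀ᵐ ξ : ℝ, (‖convol x u ξ - convol y w ξ‖₊ : ENNReal)
      ≤ (‖convol (fun t => x t - y t) u ξ‖₊ : ENNReal)
        + (‖convol y (fun t => u t - w t) ξ‖₊ : ENNReal) := by
  have hxy : Integrable (fun t => x t - y t) := hx.sub hy
  have huw : Integrable (fun t => u t - w t) := hu.sub hw
  filter_upwards [convol_ae_int hx hu, convol_ae_int hy hw,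
    convol_ae_int hxy hu, convol_ae_int hy huw] with ξ h1 h2 h3 h4
  have key : convol x u ξ - convol y w ξ
      = convol (fun t => x t - y t) u ξ + convol y (fun t => u t - w t) ξ := by
    simp only [convol]
    rw [← integral_sub h1 h2, ← integral_add h3 h4]
    congr 1
    funext η
    ring
  rw [key]
  exact_mod_cast nnnorm_add_le _ _

lemma convPow_sub {u w : ℝ → ℂ} (hu : Integrable u) (hw : Integrable w) {M : ENNReal}
    (hMu : ∫⁻ x : ℝ, (‖u x‖₊ : ENNReal) ≤ M) (hMw : ∫⁻ x : ℝ, (‖w x‖₊ : ENNReal) ≤ M) :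
    ∀ k : ℕ, ∫⁻ ξ : ℝ, (‖convPow u (k + 1) ξ - convPow w (k + 1) ξ‖₊ : ENNReal)
      ≤ (k + 1 : ENNReal) * M ^ k * ∫⁻ x : ℝ, (‖u x - w x‖₊ : ENNReal) := by
  intro k
  set D := ∫⁻ x : ℝ, (‖u x - w x‖₊ : ENNReal) with hD
  induction k with
  | zero => simp [show convPow u 1 = u from rfl, show convPow w 1 = w from rfl, hD]
  | succ k ih =>
      rw [convPow_succ, convPow_succ]
      have h1 : Integrable (convPow u (k+1)) := convPow_int hu k
      have h2 : Integrable (convPow w (k+1)) := convPow_int hw k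
      have step := conv_sub_ae h1 h2 hu hw
      refine (lintegral_mono_ae step).trans ?_
      have hm1 : AEMeasurable (fun ξ : ℝ =>
          (‖convol (fun t => convPow u (k+1) t - convPow w (k+1) t) u ξ‖₊ : ENNReal)) volume :=
        (convol_integrable (h1.sub h2) hu).aestronglyMeasurable.enorm
      rw [lintegral_add_left' hm1]
      have b1 := (lconv (h1.sub h2) hu).trans
        (mul_le_mul' ih hMu)
      have b2 := (lconv h2 (hu.sub hw)).trans
        (mul_le_mul' (convPow_lint hw hMw k) (le_refl D))
      refine (add_le_add b1 b2).trans_eq ?_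
      push_cast
      ring

noncomputable def eterm (u : ℝ → ℂ) (m : ℕ) (ξ : ℝ) : ℂ :=
  convPow u (m + 2) ξ / ((m + 2).factorial : ℂ)

lemma exp2Star_eq (u : ℝ → ℂ) (ξ : ℝ) : exp2Star u ξ = ∑' m : ℕ, eterm u m ξ := rfl

lemma eterm_int {u : ℝ → ℂ} (hu : Integrable u) (m : ℕ) : Integrable (eterm u m) :=
  (convPow_int hu (m + 1)).div_const _

lemma norm_fact_ge (m : ℕ) : (1 : ℝ) ≤ ‖((m + 2).factorial : ℂ)‖ := by
  rw [show ((m + 2).factorial : ℂ) = ((m + 2).factorial : ℝ) by push_cast; ring,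
    Complex.norm_real, Real.norm_natCast]
  exact_mod_cast Nat.one_le_iff_ne_zero.2 (Nat.factorial_ne_zero _)

lemma enorm_eterm_le (u : ℝ → ℂ) (m : ℕ) (ξ : ℝ) :
    (‖eterm u m ξ‖₊ : ENNReal) ≤ (‖convPow u (m + 2) ξ‖₊ : ENNReal) := by
  have h : ‖eterm u m ξ‖ ≤ ‖convPow u (m + 2) ξ‖ := by
    rw [eterm, norm_div]
    exact div_le_self (norm_nonneg _) (norm_fact_ge m)
  exact_mod_cast h

lemma tsum_pow_ne_top {M : ENNReal} (hM1 : M < 1) : (∑' m : ℕ, M ^ m) ≠ ⊤ := by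
  rw [ENNReal.tsum_geometric]
  simp only [Ne, ENNReal.inv_eq_top, tsub_eq_zero_iff_le]
  exact fun h => absurd hM1 (not_lt.2 h)

lemma ae_summable_eterm {u : ℝ → ℂ} (hu : Integrable u) {M : ENNReal}
    (hM : ∫⁻ x : ℝ, (‖u x‖₊ : ENNReal) ≤ M) (hM1 : M < 1) :
    ∀ᵐ ξ : ℝ, Summable (fun m => ‖eterm u m ξ‖) := by
  have hmeas : ∀ m : ℕ, AEMeasurable (fun ξ => (‖eterm u m ξ‖₊ : ENNReal)) volume :=
    fun m => (eterm_int hu m).aestronglyMeasurable.enorm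
  have hbound : ∀ m : ℕ, ∫⁻ ξ : ℝ, (‖eterm u m ξ‖₊ : ENNReal) ≤ M ^ m := by
    intro m
    refine (lintegral_mono (fun ξ => enorm_eterm_le u m ξ)).trans
      ((convPow_lint hu hM (m + 1)).trans ?_)
    exact pow_le_pow_of_le_one zero_le hM1.le (by omega)
  have hsum : ∫⁻ ξ : ℝ, ∑' m : ℕ, (‖eterm u m ξ‖₊ : ENNReal) ≠ ⊤ := by
    rw [lintegral_tsum hmeas]
    exact ne_top_of_le_ne_top (tsum_pow_ne_top hM1) (ENNReal.tsum_le_tsum hbound)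
  have := ae_lt_top' (AEMeasurable.ennreal_tsum hmeas) hsum
  filter_upwards [this] with ξ hξ
  have h1 : Summable (fun m => ‖eterm u m ξ‖₊) :=
    ENNReal.tsum_coe_ne_top_iff_summable.1 hξ.ne
  exact NNReal.summable_coe.2 h1

lemma exp_sub {u w : ℝ → ℂ} (hu : Integrable u) (hw : Integrable w) {M : ENNReal}
    (hMu : ∫⁻ x : ℝ, (‖u x‖₊ : ENNReal) ≤ M) (hMw : ∫⁻ x : ℝ, (‖w x‖₊ : ENNReal) ≤ M)
    (hM1 : M < 1) :
    ∫⁻ ξ : ℝ, (‖exp2Star u ξ - exp2Star w ξ‖₊ : ENNReal)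
      ≤ (1 - M)⁻¹ * (M * ∫⁻ x : ℝ, (‖u x - w x‖₊ : ENNReal)) := by
  set D := ∫⁻ x : ℝ, (‖u x - w x‖₊ : ENNReal) with hD
  -- pointwise a.e. bound
  have hpt : ∀ᵐ ξ : ℝ, (‖exp2Star u ξ - exp2Star w ξ‖₊ : ENNReal)
      ≤ ∑' m : ℕ, (‖eterm u m ξ - eterm w m ξ‖₊ : ENNReal) := by
    filter_upwards [ae_summable_eterm hu hMu hM1, ae_summable_eterm hw hMw hM1]
      with ξ hsu hsw
    have hc : Summable (fun m => ‖eterm u m ξ - eterm w m ξ‖) := by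
      refine Summable.of_nonneg_of_le (fun m => norm_nonneg _)
        (fun m => norm_sub_le _ _) (hsu.add hsw)
    have heq : exp2Star u ξ - exp2Star w ξ = ∑' m : ℕ, (eterm u m ξ - eterm w m ξ) := by
      rw [exp2Star_eq, exp2Star_eq, Summable.tsum_sub hsu.of_norm hsw.of_norm]
    rw [heq]
    calc (‖∑' m : ℕ, (eterm u m ξ - eterm w m ξ)‖₊ : ENNReal)
        = ENNReal.ofReal ‖∑' m : ℕ, (eterm u m ξ - eterm w m ξ)‖ :=
          (ofReal_norm_eq_coe_nnnorm _).symm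
      _ ≤ ENNReal.ofReal (∑' m : ℕ, ‖eterm u m ξ - eterm w m ξ‖) :=
          ENNReal.ofReal_le_ofReal (norm_tsum_le_tsum_norm hc)
      _ = ∑' m : ℕ, ENNReal.ofReal ‖eterm u m ξ - eterm w m ξ‖ :=
          ENNReal.ofReal_tsum_of_nonneg (fun m => norm_nonneg _) hc
      _ = ∑' m : ℕ, (‖eterm u m ξ - eterm w m ξ‖₊ : ENNReal) := by
          simp_rw [ofReal_norm_eq_coe_nnnorm]
  refine (lintegral_mono_ae hpt).trans ?_
  have hmeas : ∀ m : ℕ, AEMeasurable (fun ξ => (‖eterm u m ξ - eterm w m ξ‖₊ : ENNReal)) volume :=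
    fun m => ((eterm_int hu m).sub (eterm_int hw m)).aestronglyMeasurable.enorm
  rw [lintegral_tsum hmeas]
  -- bound each term
  have hterm : ∀ m : ℕ, ∫⁻ ξ : ℝ, (‖eterm u m ξ - eterm w m ξ‖₊ : ENNReal)
      ≤ M ^ m * (M * D) := by
    intro m
    have hfac : ∀ ξ : ℝ, (‖eterm u m ξ - eterm w m ξ‖₊ : ENNReal)
        = ENNReal.ofReal (((m + 2).factorial : ℝ)⁻¹)
          * (‖convPow u (m + 2) ξ - convPow w (m + 2) ξ‖₊ : ENNReal) := by
      intro ξ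
      rw [← ofReal_norm_eq_coe_nnnorm, ← ofReal_norm_eq_coe_nnnorm,
        ← ENNReal.ofReal_mul (by positivity)]
      congr 1
      rw [eterm, eterm, div_sub_div_same, norm_div]
      rw [show ((m + 2).factorial : ℂ) = ((m + 2).factorial : ℝ) by push_cast; ring,
        Complex.norm_real, Real.norm_natCast]
      rw [div_eq_inv_mul]
    simp_rw [hfac]
    rw [lintegral_const_mul' _ _ ENNReal.ofReal_ne_top]
    calc ENNReal.ofReal (((m + 2).factorial : ℝ)⁻¹)
          * ∫⁻ ξ : ℝ, (‖convPow u (m + 2) ξ - convPow w (m + 2) ξ‖₊ : ENNReal)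
        ≤ ENNReal.ofReal (((m + 2).factorial : ℝ)⁻¹)
          * (((m + 1 : ℕ) + 1 : ENNReal) * M ^ (m + 1) * D) := by
          exact mul_le_mul' le_rfl (convPow_sub hu hw hMu hMw (m + 1))
      _ = (ENNReal.ofReal (((m + 2).factorial : ℝ)⁻¹) * ((m + 2 : ℕ) : ENNReal))
          * (M ^ (m + 1) * D) := by push_cast; ring
      _ ≤ 1 * (M ^ (m + 1) * D) := by
          refine mul_le_mul' ?_ le_rfl
          rw [show ((m + 2 : ℕ) : ENNReal) = ENNReal.ofReal ((m + 2 : ℕ) : ℝ) from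
            (ENNReal.ofReal_natCast (m + 2)).symm,
            ← ENNReal.ofReal_mul (by positivity)]
          refine ENNReal.ofReal_le_one.2 ?_
          rw [inv_mul_le_iff₀ (by positivity), mul_one]
          exact_mod_cast Nat.self_le_factorial (m + 2)
      _ = M ^ m * (M * D) := by rw [one_mul, pow_succ]; ring
  refine (ENNReal.tsum_le_tsum hterm).trans_eq ?_
  rw [ENNReal.tsum_mul_right, ENNReal.tsum_geometric]

section W

variable {lam : ℝ} (hlam : 0 < lam) {b : ℝ → ℝ}
  (hb2 : ∀ ξ : ℝ, 0 ≤ b ξ ∧ b ξ ≤ 1)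
  (hb3 : ∀ ξ : ℝ, Real.sqrt 2 * lam ≤ |ξ| → b ξ = 0)

include hlam hb2 hb3 in

lemma rb_bounds (ξ : ℝ) :
    0 ≤ b ξ / (4 * lam ^ 2 - ξ ^ 2) ∧ b ξ / (4 * lam ^ 2 - ξ ^ 2) ≤ 1 / (2 * lam ^ 2)
      ∧ |ξ| * (b ξ / (4 * lam ^ 2 - ξ ^ 2)) ≤ 1 / lam := by
  by_cases h : Real.sqrt 2 * lam ≤ |ξ|
  · rw [hb3 ξ h]
    simp only [zero_div, mul_zero, le_refl, true_and]
    constructor <;> positivity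
  · push_neg at h
    have habs := abs_nonneg ξ
    have hs2 : Real.sqrt 2 ≤ 2 := by
      nlinarith [Real.sq_sqrt (le_of_lt two_pos), Real.sqrt_nonneg 2]
    have h2 : ξ ^ 2 < 2 * lam ^ 2 := by
      have := mul_self_lt_mul_self habs h
      nlinarith [sq_abs ξ, Real.sq_sqrt (le_of_lt two_pos), Real.sqrt_nonneg 2]
    have hden : 0 < 4 * lam ^ 2 - ξ ^ 2 := by nlinarith
    obtain ⟨hb0, hb1⟩ := hb2 ξ
    refine ⟨div_nonneg hb0 hden.le, ?_, ?_⟩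
    · rw [div_le_div_iff₀ hden (by positivity)]
      nlinarith
    · rw [mul_div_assoc', div_le_div_iff₀ hden hlam]
      have hx2 : |ξ| ≤ 2 * lam := by
        refine h.le.trans ?_
        nlinarith
      have k1 : |ξ| * b ξ * lam ≤ |ξ| * lam := by nlinarith [mul_le_mul_of_nonneg_left hb1 (mul_nonneg habs hlam.le)]
      have k2 : |ξ| * lam ≤ 2 * lam ^ 2 := by nlinarith
      linarith

include hlam hb2 hb3 in

lemma Wb_norm (f : ℝ → ℂ) (ξ : ℝ) :
    ‖opWb lam b f ξ‖ ≤ 1 / (2 * lam ^ 2) * ‖f ξ‖ := by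
  obtain ⟨h0, h1, _⟩ := rb_bounds hlam hb2 hb3 ξ
  rw [opWb, norm_mul, Complex.norm_real, Real.norm_eq_abs, abs_of_nonneg h0, mul_comm]
  exact mul_le_mul_of_nonneg_right h1 (norm_nonneg _)

include hlam hb2 hb3 in

lemma Wtb_norm (f : ℝ → ℂ) (ξ : ℝ) :
    ‖opWtb lam b f ξ‖ ≤ 1 / lam * ‖f ξ‖ := by
  obtain ⟨h0, _, h2⟩ := rb_bounds hlam hb2 hb3 ξ
  rw [opWtb, norm_mul, norm_mul, norm_mul, Complex.norm_real, Complex.norm_I, mul_one,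
    Complex.norm_real, Real.norm_eq_abs, Real.norm_eq_abs, abs_of_nonneg h0]
  calc ‖f ξ‖ * |ξ| * (b ξ / (4 * lam ^ 2 - ξ ^ 2))
      = |ξ| * (b ξ / (4 * lam ^ 2 - ξ ^ 2)) * ‖f ξ‖ := by ring
    _ ≤ 1 / lam * ‖f ξ‖ := mul_le_mul_of_nonneg_right h2 (norm_nonneg _)

variable (hb : Continuous b)

include hb in

lemma r_meas : Measurable (fun ξ : ℝ => ((b ξ / (4 * lam ^ 2 - ξ ^ 2) : ℝ) : ℂ)) := by
  apply Complex.measurable_ofReal.comp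
  exact hb.measurable.div (measurable_const.sub (measurable_id.pow_const 2))

include hb in

lemma Wb_meas {f : ℝ → ℂ} (hf : AEStronglyMeasurable f volume) :
    AEStronglyMeasurable (opWb lam b f) volume :=
  hf.mul (r_meas hb).aestronglyMeasurable

include hb in

lemma Wtb_meas {f : ℝ → ℂ} (hf : AEStronglyMeasurable f volume) :
    AEStronglyMeasurable (opWtb lam b f) volume :=
  (((hf.mul aestronglyMeasurable_const).mul
    Complex.measurable_ofReal.aestronglyMeasurable).mul (r_meas hb).aestronglyMeasurable)

include hlam hb2 hb3 hb in

lemma Wb_int {f : ℝ → ℂ} (hf : Integrable f) : Integrable (opWb lam b f) := by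
  refine Integrable.mono' (hf.norm.const_mul (1 / (2 * lam ^ 2)))
    (Wb_meas hb hf.aestronglyMeasurable) ?_
  exact Filter.Eventually.of_forall (Wb_norm hlam hb2 hb3 f)

include hlam hb2 hb3 hb in

lemma Wtb_int {f : ℝ → ℂ} (hf : Integrable f) : Integrable (opWtb lam b f) := by
  refine Integrable.mono' (hf.norm.const_mul (1 / lam))
    (Wtb_meas hb hf.aestronglyMeasurable) ?_
  exact Filter.Eventually.of_forall (Wtb_norm hlam hb2 hb3 f)

lemma Wb_sub (f g : ℝ → ℂ) (ξ : ℝ) :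
    opWb lam b f ξ - opWb lam b g ξ = opWb lam b (fun x => f x - g x) ξ := by
  simp only [opWb]; ring

lemma Wtb_sub (f g : ℝ → ℂ) (ξ : ℝ) :
    opWtb lam b f ξ - opWtb lam b g ξ = opWtb lam b (fun x => f x - g x) ξ := by
  simp only [opWtb]; ring

end W

lemma lint_le_of_bound {u v : ℝ → ℂ} {c : ℝ} (hc : 0 ≤ c)
    (h : ∀ ξ : ℝ, ‖u ξ‖ ≤ c * ‖v ξ‖) :
    ∫⁻ x : ℝ, (‖u x‖₊ : ENNReal) ≤ ENNReal.ofReal c * ∫⁻ x : ℝ, (‖v x‖₊ : ENNReal) := by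
  rw [← lintegral_const_mul' _ _ ENNReal.ofReal_ne_top]
  refine lintegral_mono fun ξ => ?_
  rw [← ofReal_norm_eq_coe_nnnorm, ← ofReal_norm_eq_coe_nnnorm,
    ← ENNReal.ofReal_mul hc]
  exact ENNReal.ofReal_le_ofReal (h ξ)

/-- for all `f, g ∈ L¹(ℝ)` with `‖f‖₁ ≤ λ²/9` and `‖g‖₁ ≤ λ²/9`,
`‖R[f] − R[g]‖₁ ≤ (1/2)·‖f − g‖₁`. -/
theorem stmt_5 (lam : ℝ) (hlam : 0 < lam)
    (b : ℝ → ℝ) (hb : ContDiff ℝ (⊤ : ℕ∞) b)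
    (hb1 : ∀ ξ : ℝ, |ξ| ≤ lam → b ξ = 1)
    (hb2 : ∀ ξ : ℝ, 0 ≤ b ξ ∧ b ξ ≤ 1)
    (hb3 : ∀ ξ : ℝ, Real.sqrt 2 * lam ≤ |ξ| → b ξ = 0)
    (v : ℝ → ℂ) (hv : Integrable v)
    (f g : ℝ → ℂ) (hf : Integrable f) (hg : Integrable g)
    (hfn : (∫ x : ℝ, ‖f x‖) ≤ lam ^ 2 / 9)
    (hgn : (∫ x : ℝ, ‖g x‖) ≤ lam ^ 2 / 9) :
    eLpNorm (fun ξ => opR lam b v f ξ - opR lam b v g ξ) 1 volume ≤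
      ENNReal.ofReal ((1 / 2) * ∫ x : ℝ, ‖f x - g x‖) := by
  classical
  have hbc : Continuous b := hb.continuous
  set φ := opWtb lam b f with hφdef
  set ψ := opWtb lam b g with hψdef
  set Φ := opWb lam b f with hΦdef
  set Ψ := opWb lam b g with hΨdef
  have hφi : Integrable φ := Wtb_int hlam hb2 hb3 hbc hf
  have hψi : Integrable ψ := Wtb_int hlam hb2 hb3 hbc hg
  have hΦi : Integrable Φ := Wb_int hlam hb2 hb3 hbc hf
  have hΨi : Integrable Ψ := Wb_int hlam hb2 hb3 hbc hg
  have hd : Integrable (fun x => f x - g x) := hf.sub hg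
  set Den := ∫⁻ x : ℝ, (‖f x - g x‖₊ : ENNReal) with hDen
  have hDen' : Den = ENNReal.ofReal (∫ x : ℝ, ‖f x - g x‖) :=
    (ofReal_integral_norm_eq_lintegral_nnnorm hd).symm
  -- L¹ bounds for f and g
  have hF : ∫⁻ x : ℝ, (‖f x‖₊ : ENNReal) ≤ ENNReal.ofReal (lam ^ 2 / 9) := by
    rw [← ofReal_integral_norm_eq_lintegral_nnnorm hf]
    exact ENNReal.ofReal_le_ofReal hfn
  have hG : ∫⁻ x : ℝ, (‖g x‖₊ : ENNReal) ≤ ENNReal.ofReal (lam ^ 2 / 9) := by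
    rw [← ofReal_integral_norm_eq_lintegral_nnnorm hg]
    exact ENNReal.ofReal_le_ofReal hgn
  -- bounds for the weighted functions
  have hNφ : ∫⁻ x : ℝ, (‖φ x‖₊ : ENNReal) ≤ ENNReal.ofReal (lam / 9) := by
    refine (lint_le_of_bound (by positivity) (Wtb_norm hlam hb2 hb3 f)).trans ?_
    refine (mul_le_mul' le_rfl hF).trans_eq ?_
    rw [← ENNReal.ofReal_mul (by positivity)]
    congr 1
    field_simp
  have hNψ : ∫⁻ x : ℝ, (‖ψ x‖₊ : ENNReal) ≤ ENNReal.ofReal (lam / 9) := by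
    refine (lint_le_of_bound (by positivity) (Wtb_norm hlam hb2 hb3 g)).trans ?_
    refine (mul_le_mul' le_rfl hG).trans_eq ?_
    rw [← ENNReal.ofReal_mul (by positivity)]
    congr 1
    field_simp
  have hDt : ∫⁻ x : ℝ, (‖φ x - ψ x‖₊ : ENNReal) ≤ ENNReal.ofReal (1 / lam) * Den := by
    refine lint_le_of_bound (by positivity) (fun ξ => ?_)
    rw [hφdef, hψdef, Wtb_sub]
    exact Wtb_norm hlam hb2 hb3 (fun x => f x - g x) ξ
  have hMΦ : ∫⁻ x : ℝ, (‖Φ x‖₊ : ENNReal) ≤ ENNReal.ofReal (1 / 18) := by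
    refine (lint_le_of_bound (by positivity) (Wb_norm hlam hb2 hb3 f)).trans ?_
    refine (mul_le_mul' le_rfl hF).trans_eq ?_
    rw [← ENNReal.ofReal_mul (by positivity)]
    congr 1
    field_simp
    ring
  have hMΨ : ∫⁻ x : ℝ, (‖Ψ x‖₊ : ENNReal) ≤ ENNReal.ofReal (1 / 18) := by
    refine (lint_le_of_bound (by positivity) (Wb_norm hlam hb2 hb3 g)).trans ?_
    refine (mul_le_mul' le_rfl hG).trans_eq ?_
    rw [← ENNReal.ofReal_mul (by positivity)]
    congr 1
    field_simp
    ring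
  have hDw : ∫⁻ x : ℝ, (‖Φ x - Ψ x‖₊ : ENNReal)
      ≤ ENNReal.ofReal (1 / (2 * lam ^ 2)) * Den := by
    refine lint_le_of_bound (by positivity) (fun ξ => ?_)
    rw [hΦdef, hΨdef, Wb_sub]
    exact Wb_norm hlam hb2 hb3 (fun x => f x - g x) ξ
  -- quadratic part
  have hQ : ∫⁻ ξ : ℝ, (‖convol φ φ ξ - convol ψ ψ ξ‖₊ : ENNReal)
      ≤ ENNReal.ofReal (2 / 9) * Den := by
    have hd2 : Integrable (fun t => φ t - ψ t) := hφi.sub hψi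
    refine (lintegral_mono_ae (conv_sub_ae hφi hψi hφi hψi)).trans ?_
    rw [lintegral_add_left' (f := fun ξ => (‖convol (fun t => φ t - ψ t) φ ξ‖₊ : ENNReal))
      ((convol_integrable hd2 hφi).aestronglyMeasurable.enorm)]
    have b1 := (lconv hd2 hφi).trans (mul_le_mul' hDt hNφ)
    have b2 := (lconv hψi hd2).trans (mul_le_mul' hNψ hDt)
    refine (add_le_add b1 b2).trans_eq ?_
    have e1 : ENNReal.ofReal (1 / lam) * ENNReal.ofReal (lam / 9)
        = ENNReal.ofReal (1 / 9) := by
      rw [← ENNReal.ofReal_mul (by positivity)]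
      congr 1
      field_simp
    calc ENNReal.ofReal (1 / lam) * Den * ENNReal.ofReal (lam / 9)
          + ENNReal.ofReal (lam / 9) * (ENNReal.ofReal (1 / lam) * Den)
        = (ENNReal.ofReal (1 / lam) * ENNReal.ofReal (lam / 9)) * Den
          + (ENNReal.ofReal (1 / lam) * ENNReal.ofReal (lam / 9)) * Den := by ring
      _ = ENNReal.ofReal (2 / 9) * Den := by
          rw [e1, ← add_mul, ← ENNReal.ofReal_add (by norm_num) (by norm_num)]
          norm_num
  -- exponential part
  have hE : ∫⁻ ξ : ℝ, (‖exp2Star Φ ξ - exp2Star Ψ ξ‖₊ : ENNReal)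
      ≤ ENNReal.ofReal (1 / (17 * (2 * lam ^ 2))) * Den := by
    have hM1 : ENNReal.ofReal (1 / 18) < 1 := by
      rw [show (1 : ENNReal) = ENNReal.ofReal 1 from ENNReal.ofReal_one.symm]
      exact (ENNReal.ofReal_lt_ofReal_iff (by norm_num)).2 (by norm_num)
    have h := exp_sub hΦi hΨi hMΦ hMΨ hM1
    refine h.trans ?_
    have hinv : (1 - ENNReal.ofReal (1 / 18))⁻¹ = ENNReal.ofReal (18 / 17) := by
      rw [show (1 : ENNReal) = ENNReal.ofReal 1 from ENNReal.ofReal_one.symm,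
        ← ENNReal.ofReal_sub _ (by norm_num : (0:ℝ) ≤ 1 / 18),
        ← ENNReal.ofReal_inv_of_pos (by norm_num : (0:ℝ) < 1 - 1 / 18)]
      norm_num
    rw [hinv]
    have key : ENNReal.ofReal (18 / 17) * (ENNReal.ofReal (1 / 18)
        * (ENNReal.ofReal (1 / (2 * lam ^ 2)) * Den))
        = ENNReal.ofReal (1 / (17 * (2 * lam ^ 2))) * Den := by
      rw [show ENNReal.ofReal (1 / 18) * (ENNReal.ofReal (1 / (2 * lam ^ 2)) * Den)
          = ENNReal.ofReal (1 / 18 * (1 / (2 * lam ^ 2))) * Den by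
            rw [← mul_assoc, ← ENNReal.ofReal_mul (by norm_num)],
        ← mul_assoc, ← ENNReal.ofReal_mul (by norm_num)]
      congr 2
      field_simp
    exact (mul_le_mul' le_rfl (mul_le_mul' le_rfl hDw)).trans key.le
  -- pointwise bound for the difference of R
  have hpt : ∀ ξ : ℝ, (‖opR lam b v f ξ - opR lam b v g ξ‖₊ : ENNReal)
      ≤ ENNReal.ofReal (1 / 4) * (‖convol φ φ ξ - convol ψ ψ ξ‖₊ : ENNReal)
        + ENNReal.ofReal (4 * lam ^ 2) * (‖exp2Star Φ ξ - exp2Star Ψ ξ‖₊ : ENNReal) := by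
    intro ξ
    have key : opR lam b v f ξ - opR lam b v g ξ
        = (1 / 4 : ℂ) * (convol φ φ ξ - convol ψ ψ ξ)
          - (4 * (lam : ℂ) ^ 2) * (exp2Star Φ ξ - exp2Star Ψ ξ) := by
      simp only [opR, hφdef, hψdef, hΦdef, hΨdef]
      ring
    have e1 : ‖(1 / 4 : ℂ)‖ = 1 / 4 := by
      rw [show (1 / 4 : ℂ) = ((1 / 4 : ℝ) : ℂ) by norm_num, Complex.norm_real]
      norm_num
    have e2 : ‖(4 * (lam : ℂ) ^ 2)‖ = 4 * lam ^ 2 := by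
      rw [show (4 * (lam : ℂ) ^ 2) = ((4 * lam ^ 2 : ℝ) : ℂ) by push_cast; ring,
        Complex.norm_real, Real.norm_eq_abs, abs_of_nonneg (by positivity)]
    have hreal : ‖opR lam b v f ξ - opR lam b v g ξ‖
        ≤ 1 / 4 * ‖convol φ φ ξ - convol ψ ψ ξ‖
          + 4 * lam ^ 2 * ‖exp2Star Φ ξ - exp2Star Ψ ξ‖ := by
      rw [key]
      refine (norm_sub_le _ _).trans ?_
      rw [norm_mul, norm_mul, e1, e2]
    rw [← ofReal_norm_eq_coe_nnnorm, ← ofReal_norm_eq_coe_nnnorm,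
      ← ofReal_norm_eq_coe_nnnorm, ← ENNReal.ofReal_mul (by norm_num),
      ← ENNReal.ofReal_mul (by positivity),
      ← ENNReal.ofReal_add (by positivity) (by positivity)]
    exact ENNReal.ofReal_le_ofReal hreal
  -- assemble
  rw [eLpNorm_one_eq_lintegral_nnnorm]
  have hQm : AEMeasurable (fun ξ : ℝ => ENNReal.ofReal (1 / 4)
      * (‖convol φ φ ξ - convol ψ ψ ξ‖₊ : ENNReal)) volume :=
    (((convol_integrable hφi hφi).sub
      (convol_integrable hψi hψi)).aestronglyMeasurable.enorm).const_mul _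
  calc ∫⁻ ξ : ℝ, (‖opR lam b v f ξ - opR lam b v g ξ‖₊ : ENNReal)
      ≤ ∫⁻ ξ : ℝ, (ENNReal.ofReal (1 / 4)
          * (‖convol φ φ ξ - convol ψ ψ ξ‖₊ : ENNReal)
        + ENNReal.ofReal (4 * lam ^ 2)
          * (‖exp2Star Φ ξ - exp2Star Ψ ξ‖₊ : ENNReal)) := lintegral_mono hpt
    _ = ENNReal.ofReal (1 / 4)
          * (∫⁻ ξ : ℝ, (‖convol φ φ ξ - convol ψ ψ ξ‖₊ : ENNReal))
        + ENNReal.ofReal (4 * lam ^ 2)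
          * (∫⁻ ξ : ℝ, (‖exp2Star Φ ξ - exp2Star Ψ ξ‖₊ : ENNReal)) := by
        rw [lintegral_add_left' hQm, lintegral_const_mul' _ _ ENNReal.ofReal_ne_top,
          lintegral_const_mul' _ _ ENNReal.ofReal_ne_top]
    _ ≤ ENNReal.ofReal (1 / 4) * (ENNReal.ofReal (2 / 9) * Den)
        + ENNReal.ofReal (4 * lam ^ 2)
          * (ENNReal.ofReal (1 / (17 * (2 * lam ^ 2))) * Den) :=
        add_le_add (mul_le_mul' le_rfl hQ) (mul_le_mul' le_rfl hE)
    _ = (ENNReal.ofReal (1 / 18) + ENNReal.ofReal (2 / 17)) * Den := by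
        have q1 : ENNReal.ofReal (1 / 4) * (ENNReal.ofReal (2 / 9) * Den)
            = ENNReal.ofReal (1 / 18) * Den := by
          rw [← mul_assoc, ← ENNReal.ofReal_mul (by norm_num)]
          norm_num
        have q2 : ENNReal.ofReal (4 * lam ^ 2)
            * (ENNReal.ofReal (1 / (17 * (2 * lam ^ 2))) * Den)
            = ENNReal.ofReal (2 / 17) * Den := by
          rw [← mul_assoc, ← ENNReal.ofReal_mul (by positivity)]
          congr 2
          field_simp
          ring
        rw [q1, q2, add_mul]
    _ ≤ ENNReal.ofReal (1 / 2) * Den := by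
        refine mul_le_mul' ?_ le_rfl
        rw [← ENNReal.ofReal_add (by norm_num) (by norm_num)]
        exact ENNReal.ofReal_le_ofReal (by norm_num)
    _ = ENNReal.ofReal ((1 / 2) * ∫ x : ℝ, ‖f x - g x‖) := by
        rw [hDen', ← ENNReal.ofReal_mul (by norm_num)]
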